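/- arXiv:2210.12644 — 3 statements merged into one kernel-verified Lean document; each statement's English description precedes it below -/
import Mathlib

section
/- Let λ ∈ (0,1), cos θ = 1 − 2λ, sin θ = 2√(λ(1−λ)). Write G'(α, −α) = c·I − i(v_x X + v_y Y + v_z Z) as in the composition of R_{ψ₀}(−α) and R_R(α). Then c = 1 − 2λ·sin²(α/2), and the axis vector (v_x, v_y, v_z) satisfies √(1−λ)·v_z + √λ·v_x = 0. -/
theorem Gprime_opposite_phase (lam θ α : ℝ) (hlam : lam ∈ Set.Ioo (0:ℝ) 1)
    (hc : Real.cos θ = 1 - 2 * lam)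
    (hs : Real.sin θ = 2 * Real.sqrt (lam * (1 - lam))) :
    let β := -α
    let c := Real.cos (α / 2) * Real.cos (β / 2) -
      Real.sin (α / 2) * Real.sin (β / 2) * Real.cos θ
    let vx := Real.sin (β / 2) * Real.cos (α / 2) * Real.sin θ
    let vz := Real.cos (β / 2) * Real.sin (α / 2) +
      Real.sin (β / 2) * Real.cos (α / 2) * Real.cos θ
    c = 1 - 2 * lam * Real.sin (α / 2) ^ 2 ∧
      Real.sqrt (1 - lam) * vz + Real.sqrt lam * vx = 0 := by
  obtain ⟨h0, h1⟩ := hlam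
  have hl0 : (0:ℝ) ≤ lam := le_of_lt h0
  have hl1 : (0:ℝ) ≤ 1 - lam := by linarith
  intro β c vx vz
  have hβc : Real.cos (β / 2) = Real.cos (α / 2) := by
    simp [β, neg_div]
  have hβs : Real.sin (β / 2) = -Real.sin (α / 2) := by
    simp [β, neg_div]
  have hpy : Real.sin (α / 2) ^ 2 + Real.cos (α / 2) ^ 2 = 1 :=
    Real.sin_sq_add_cos_sq _
  constructor
  · show Real.cos (α / 2) * Real.cos (β / 2) -
      Real.sin (α / 2) * Real.sin (β / 2) * Real.cos θ = _
    rw [hβc, hβs, hc]; nlinarith [hpy]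
  · show Real.sqrt (1 - lam) * (Real.cos (β / 2) * Real.sin (α / 2) +
      Real.sin (β / 2) * Real.cos (α / 2) * Real.cos θ) +
      Real.sqrt lam * (Real.sin (β / 2) * Real.cos (α / 2) * Real.sin θ) = 0
    rw [hβc, hβs, hc, hs, Real.sqrt_mul hl0]
    have h2 : Real.sqrt lam ^ 2 = lam := Real.sq_sqrt hl0
    ring_nf
    rw [h2]
    ring
end

section
/- Let λ ∈ (0,1), cos θ = 1 − 2λ, sin θ = 2√(λ(1−λ)), and let F'_{xr,α} = G'(α, β₂)·G'(α, β₁) with G' as defined from the Bloch rotations. Then the scalar coefficient c of I in F'_{xr,α} = c·I − i(v_x X + v_y Y + v_z Z) equals cos(α + (β₁+β₂)/2) + 2λ·(sin α · sin((β₁+β₂)/2) − 4 sin²(α/2) sin(β₁/2) sin(β₂/2)) + 8λ²·sin²(α/2) sin(β₁/2) sin(β₂/2). -/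
open Complex Matrix

noncomputable def PauliX : Matrix (Fin 2) (Fin 2) ℂ := !![0, 1; 1, 0]
noncomputable def PauliY : Matrix (Fin 2) (Fin 2) ℂ := !![0, -Complex.I; Complex.I, 0]
noncomputable def PauliZ : Matrix (Fin 2) (Fin 2) ℂ := !![1, 0; 0, -1]

noncomputable def RotR (α : ℝ) : Matrix (Fin 2) (Fin 2) ℂ :=
  (Real.cos (α / 2) : ℂ) • (1 : Matrix (Fin 2) (Fin 2) ℂ) -
    Complex.I • ((Real.sin (α / 2) : ℂ) • PauliZ)

noncomputable def RotPsi (θ β : ℝ) : Matrix (Fin 2) (Fin 2) ℂ :=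
  (Real.cos (β / 2) : ℂ) • (1 : Matrix (Fin 2) (Fin 2) ℂ) -
    Complex.I • ((Real.sin (β / 2) : ℂ) •
      ((Real.sin θ : ℂ) • PauliX + (Real.cos θ : ℂ) • PauliZ))

noncomputable def Gp (θ α β : ℝ) : Matrix (Fin 2) (Fin 2) ℂ := RotPsi θ β * RotR α

/-- Canonical quaternion form. -/
noncomputable def QF (p0 px py pz : ℝ) : Matrix (Fin 2) (Fin 2) ℂ :=
  (p0 : ℂ) • (1 : Matrix (Fin 2) (Fin 2) ℂ) -
    Complex.I • ((px : ℂ) • PauliX + (py : ℂ) • PauliY + (pz : ℂ) • PauliZ)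

lemma QF_mul (p0 px py pz q0 qx qy qz : ℝ) :
    QF p0 px py pz * QF q0 qx qy qz =
    QF (p0*q0 - px*qx - py*qy - pz*qz)
       (p0*qx + q0*px + py*qz - pz*qy)
       (p0*qy + q0*py + pz*qx - px*qz)
       (p0*qz + q0*pz + px*qy - py*qx) := by
  have h3re : ((Complex.I)^3).re = 0 := by simp [pow_succ]
  have h3im : ((Complex.I)^3).im = -1 := by simp [pow_succ]
  ext i j
  fin_cases i <;> fin_cases j <;>
    simp [QF, PauliX, PauliY, PauliZ, Matrix.mul_apply, Fin.sum_univ_two,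
      Matrix.one_apply] <;> push_cast <;> ring_nf <;>
    simp [Complex.ext_iff, h3re, h3im] <;>
    first
      | (constructor <;> ring)
      | ring

lemma RotR_QF (α : ℝ) : RotR α = QF (Real.cos (α/2)) 0 0 (Real.sin (α/2)) := by
  simp [RotR, QF]

lemma RotPsi_QF (θ β : ℝ) :
    RotPsi θ β = QF (Real.cos (β/2)) (Real.sin (β/2) * Real.sin θ) 0
      (Real.sin (β/2) * Real.cos θ) := by
  simp [RotPsi, QF, smul_add, smul_smul, mul_comm]

theorem Fxr_alpha_cos (lam θ α β₁ β₂ : ℝ) (hlam : lam ∈ Set.Ioo (0:ℝ) 1)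
    (hc : Real.cos θ = 1 - 2 * lam)
    (hs : Real.sin θ = 2 * Real.sqrt (lam * (1 - lam))) :
    ∃ vx vy vz : ℝ,
      Gp θ α β₂ * Gp θ α β₁ =
        ((Real.cos (α + (β₁ + β₂) / 2) +
            2 * lam * (Real.sin α * Real.sin ((β₁ + β₂) / 2) -
              4 * Real.sin (α / 2) ^ 2 * Real.sin (β₁ / 2) * Real.sin (β₂ / 2)) +
            8 * lam ^ 2 * Real.sin (α / 2) ^ 2 * Real.sin (β₁ / 2) * Real.sin (β₂ / 2) : ℝ) : ℂ) •
            (1 : Matrix (Fin 2) (Fin 2) ℂ) -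
          Complex.I •
            ((vx : ℂ) • PauliX + (vy : ℂ) • PauliY + (vz : ℂ) • PauliZ) := by
  have hsq : Real.sin θ ^ 2 = 4 * lam * (1 - lam) := by
    rw [hs, mul_pow, Real.sq_sqrt (by nlinarith [hlam.1, hlam.2])]; ring
  have hGp : ∀ β : ℝ, Gp θ α β =
      QF (Real.cos (β/2) * Real.cos (α/2) - Real.sin (β/2) * Real.cos θ * Real.sin (α/2))
         (Real.cos (α/2) * (Real.sin (β/2) * Real.sin θ))
         (- (Real.sin (β/2) * Real.sin θ * Real.sin (α/2)))
         (Real.cos (β/2) * Real.sin (α/2) + Real.cos (α/2) * (Real.sin (β/2) * Real.cos θ)) := by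
    intro β
    rw [Gp, RotPsi_QF, RotR_QF, QF_mul]
    ring_nf
  rw [hGp β₁, hGp β₂, QF_mul]
  refine ⟨(Real.cos (β₂/2) * Real.cos (α/2) - Real.sin (β₂/2) * Real.cos θ * Real.sin (α/2)) *
            (Real.cos (α/2) * (Real.sin (β₁/2) * Real.sin θ)) +
          (Real.cos (β₁/2) * Real.cos (α/2) - Real.sin (β₁/2) * Real.cos θ * Real.sin (α/2)) *
            (Real.cos (α/2) * (Real.sin (β₂/2) * Real.sin θ)) +
          -(Real.sin (β₂/2) * Real.sin θ * Real.sin (α/2)) *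
            (Real.cos (β₁/2) * Real.sin (α/2) + Real.cos (α/2) * (Real.sin (β₁/2) * Real.cos θ)) -
          (Real.cos (β₂/2) * Real.sin (α/2) + Real.cos (α/2) * (Real.sin (β₂/2) * Real.cos θ)) *
            -(Real.sin (β₁/2) * Real.sin θ * Real.sin (α/2)),
      (Real.cos (β₂/2) * Real.cos (α/2) - Real.sin (β₂/2) * Real.cos θ * Real.sin (α/2)) *
            -(Real.sin (β₁/2) * Real.sin θ * Real.sin (α/2)) +
          (Real.cos (β₁/2) * Real.cos (α/2) - Real.sin (β₁/2) * Real.cos θ * Real.sin (α/2)) *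
            -(Real.sin (β₂/2) * Real.sin θ * Real.sin (α/2)) +
          (Real.cos (β₂/2) * Real.sin (α/2) + Real.cos (α/2) * (Real.sin (β₂/2) * Real.cos θ)) *
            (Real.cos (α/2) * (Real.sin (β₁/2) * Real.sin θ)) -
          Real.cos (α/2) * (Real.sin (β₂/2) * Real.sin θ) *
            (Real.cos (β₁/2) * Real.sin (α/2) + Real.cos (α/2) * (Real.sin (β₁/2) * Real.cos θ)),
      (Real.cos (β₂/2) * Real.cos (α/2) - Real.sin (β₂/2) * Real.cos θ * Real.sin (α/2)) *
            (Real.cos (β₁/2) * Real.sin (α/2) + Real.cos (α/2) * (Real.sin (β₁/2) * Real.cos θ)) +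
          (Real.cos (β₁/2) * Real.cos (α/2) - Real.sin (β₁/2) * Real.cos θ * Real.sin (α/2)) *
            (Real.cos (β₂/2) * Real.sin (α/2) + Real.cos (α/2) * (Real.sin (β₂/2) * Real.cos θ)) +
          Real.cos (α/2) * (Real.sin (β₂/2) * Real.sin θ) *
            -(Real.sin (β₁/2) * Real.sin θ * Real.sin (α/2)) -
          -(Real.sin (β₂/2) * Real.sin θ * Real.sin (α/2)) *
            (Real.cos (α/2) * (Real.sin (β₁/2) * Real.sin θ)), ?_⟩
  have key : (Real.cos (β₂/2) * Real.cos (α/2) - Real.sin (β₂/2) * Real.cos θ * Real.sin (α/2)) *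
        (Real.cos (β₁/2) * Real.cos (α/2) - Real.sin (β₁/2) * Real.cos θ * Real.sin (α/2)) -
      Real.cos (α/2) * (Real.sin (β₂/2) * Real.sin θ) *
        (Real.cos (α/2) * (Real.sin (β₁/2) * Real.sin θ)) -
      -(Real.sin (β₂/2) * Real.sin θ * Real.sin (α/2)) *
        -(Real.sin (β₁/2) * Real.sin θ * Real.sin (α/2)) -
      (Real.cos (β₂/2) * Real.sin (α/2) + Real.cos (α/2) * (Real.sin (β₂/2) * Real.cos θ)) *
        (Real.cos (β₁/2) * Real.sin (α/2) + Real.cos (α/2) * (Real.sin (β₁/2) * Real.cos θ)) =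
      Real.cos (α + (β₁ + β₂) / 2) +
        2 * lam * (Real.sin α * Real.sin ((β₁ + β₂) / 2) -
          4 * Real.sin (α / 2) ^ 2 * Real.sin (β₁ / 2) * Real.sin (β₂ / 2)) +
        8 * lam ^ 2 * Real.sin (α / 2) ^ 2 * Real.sin (β₁ / 2) * Real.sin (β₂ / 2) := by
    have e1 : α + (β₁ + β₂) / 2 = (α/2 + β₁/2) + (α/2 + β₂/2) := by ring
    rw [show Real.sin α = 2 * Real.sin (α/2) * Real.cos (α/2) by
      rw [show α = α/2 + α/2 by ring, Real.sin_add]; ring]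
    rw [show Real.sin ((β₁ + β₂)/2) = Real.sin (β₁/2 + β₂/2) by ring_nf]
    rw [e1]
    simp only [Real.sin_add, Real.cos_add]
    rw [hc]
    linear_combination (-(Real.sin (β₁/2) * Real.sin (β₂/2) *
      (Real.cos (α/2)^2 + Real.sin (α/2)^2))) * hsq
  rw [key]
  rfl
end

section
/- Let λ ∈ (0,1), cos θ = 1 − 2λ, sin θ = 2√(λ(1−λ)), and F'_{xr,α} = G'(α, β₂)·G'(α, β₁) = c·I − i(v_x X + v_y Y + v_z Z). Then v_y = 2√(λ(1−λ))·(−sin α · cos(β₁/2) sin(β₂/2) + 2(1−2λ) sin²(α/2) sin(β₁/2) sin(β₂/2)) and v_x = 2√(λ(1−λ))·(sin(β₁/2)cos(β₂/2) + cos α · cos(β₁/2) sin(β₂/2) − (1−2λ) sin α · sin(β₁/2) sin(β₂/2)). -/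
open Complex Matrix

/-- quaternion components of Gp -/
noncomputable def qw (θ α β : ℝ) : ℝ :=
  Real.cos (β/2) * Real.cos (α/2) - Real.cos θ * Real.sin (β/2) * Real.sin (α/2)
noncomputable def qx (θ α β : ℝ) : ℝ := Real.sin θ * Real.sin (β/2) * Real.cos (α/2)
noncomputable def qy (θ α β : ℝ) : ℝ := -(Real.sin θ * Real.sin (β/2) * Real.sin (α/2))
noncomputable def qz (θ α β : ℝ) : ℝ :=
  Real.cos (β/2) * Real.sin (α/2) + Real.cos θ * Real.sin (β/2) * Real.cos (α/2)

noncomputable def rawC (θ α β₁ β₂ : ℝ) : ℝ :=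
  qw θ α β₂ * qw θ α β₁ -
    (qx θ α β₂ * qx θ α β₁ + qy θ α β₂ * qy θ α β₁ + qz θ α β₂ * qz θ α β₁)
noncomputable def rawX (θ α β₁ β₂ : ℝ) : ℝ :=
  qw θ α β₂ * qx θ α β₁ + qw θ α β₁ * qx θ α β₂ +
    (qy θ α β₂ * qz θ α β₁ - qz θ α β₂ * qy θ α β₁)
noncomputable def rawY (θ α β₁ β₂ : ℝ) : ℝ :=
  qw θ α β₂ * qy θ α β₁ + qw θ α β₁ * qy θ α β₂ +
    (qz θ α β₂ * qx θ α β₁ - qx θ α β₂ * qz θ α β₁)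
noncomputable def rawZ (θ α β₁ β₂ : ℝ) : ℝ :=
  qw θ α β₂ * qz θ α β₁ + qw θ α β₁ * qz θ α β₂ +
    (qx θ α β₂ * qy θ α β₁ - qy θ α β₂ * qx θ α β₁)

lemma key (θ α β₁ β₂ : ℝ) :
    Gp θ α β₂ * Gp θ α β₁ =
      ((rawC θ α β₁ β₂ : ℝ) : ℂ) • (1 : Matrix (Fin 2) (Fin 2) ℂ) -
        Complex.I •
          (((rawX θ α β₁ β₂ : ℝ) : ℂ) • PauliX +
            ((rawY θ α β₁ β₂ : ℝ) : ℂ) • PauliY +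
            ((rawZ θ α β₁ β₂ : ℝ) : ℂ) • PauliZ) := by
  ext i j
  fin_cases i <;> fin_cases j <;>
    · simp [Gp, RotPsi, RotR, PauliX, PauliY, PauliZ, rawC, rawX, rawY, rawZ,
        qw, qx, qy, qz, Matrix.mul_apply, Fin.sum_univ_two, Matrix.one_apply]
      push_cast
      ring_nf
      simp only [show Complex.I^2 = -1 by simp [Complex.I_sq],
        show Complex.I^3 = -Complex.I by rw [pow_succ, Complex.I_sq]; ring,
        show Complex.I^4 = 1 by rw [show (4:ℕ) = 2*2 from rfl, pow_mul, Complex.I_sq]; ring]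
      ring

theorem Fxr_alpha_axis_xy (lam θ α β₁ β₂ : ℝ) (hlam : lam ∈ Set.Ioo (0:ℝ) 1)
    (hc : Real.cos θ = 1 - 2 * lam)
    (hs : Real.sin θ = 2 * Real.sqrt (lam * (1 - lam))) :
    ∃ c vz : ℝ,
      Gp θ α β₂ * Gp θ α β₁ =
        ((c : ℝ) : ℂ) • (1 : Matrix (Fin 2) (Fin 2) ℂ) -
          Complex.I •
            (((2 * Real.sqrt (lam * (1 - lam)) *
                (Real.sin (β₁ / 2) * Real.cos (β₂ / 2) +
                  Real.cos α * Real.cos (β₁ / 2) * Real.sin (β₂ / 2) -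
                  (1 - 2 * lam) * Real.sin α * Real.sin (β₁ / 2) * Real.sin (β₂ / 2)) : ℝ) : ℂ) •
                PauliX +
              ((2 * Real.sqrt (lam * (1 - lam)) *
                (-(Real.sin α * Real.cos (β₁ / 2) * Real.sin (β₂ / 2)) +
                  2 * (1 - 2 * lam) * Real.sin (α / 2) ^ 2 *
                    Real.sin (β₁ / 2) * Real.sin (β₂ / 2)) : ℝ) : ℂ) • PauliY +
              ((vz : ℝ) : ℂ) • PauliZ) := by
  have hsin : Real.sin α = 2 * Real.sin (α/2) * Real.cos (α/2) := by
    rw [← Real.sin_two_mul]; ring_nf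
  have hp : Real.sin (α/2)^2 + Real.cos (α/2)^2 = 1 := Real.sin_sq_add_cos_sq _
  have hcos : Real.cos α = Real.cos (α/2)^2 - Real.sin (α/2)^2 := by
    have h2 := Real.cos_two_mul (α/2)
    rw [show (2:ℝ)*(α/2) = α by ring] at h2
    linear_combination h2 + hp
  have hx : rawX θ α β₁ β₂ =
      2 * Real.sqrt (lam * (1 - lam)) *
        (Real.sin (β₁ / 2) * Real.cos (β₂ / 2) +
          Real.cos α * Real.cos (β₁ / 2) * Real.sin (β₂ / 2) -
          (1 - 2 * lam) * Real.sin α * Real.sin (β₁ / 2) * Real.sin (β₂ / 2)) := by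
    simp only [rawX, qw, qx, qy, qz, hsin, hcos, hs, hc]
    linear_combination (2 * Real.sqrt (lam * (1 - lam)) * Real.sin (β₁/2) * Real.cos (β₂/2)) * hp
  have hy : rawY θ α β₁ β₂ =
      2 * Real.sqrt (lam * (1 - lam)) *
        (-(Real.sin α * Real.cos (β₁ / 2) * Real.sin (β₂ / 2)) +
          2 * (1 - 2 * lam) * Real.sin (α / 2) ^ 2 *
            Real.sin (β₁ / 2) * Real.sin (β₂ / 2)) := by
    simp only [rawY, qw, qx, qy, qz, hsin, hcos, hs, hc]
    ring
  exact ⟨rawC θ α β₁ β₂, rawZ θ α β₁ β₂, by rw [key, hx, hy]⟩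
end
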